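/- Let A be a finite group, B a normal subgroup with A/B abelian, and π an irreducible complex representation of A. Then the dimension of the algebra of B-intertwining operators End_B(Res_B π) equals the cardinality of the group X(π) of characters χ of A/B with π ⊗ χ ≅ π. -/

import Mathlib

set_option maxHeartbeats 1000000
set_option synthInstance.maxHeartbeats 1000000

section ReprDefs

variable {A : Type} [Group A] {V W : Type}
  [AddCommGroup V] [Module ℂ V] [AddCommGroup W] [Module ℂ W]

/-- The twist of a representation by a `ℂˣ`-valued character of the group. -/
def twist (π : Representation ℂ A V) (χ : A →* ℂˣ) : Representation ℂ A V where
  toFun g := (χ g : ℂ) • π g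
  map_one' := by simp
  map_mul' g h := by
    simp only [map_mul, Units.val_mul, mul_smul, smul_mul_assoc, mul_smul_comm]
    rw [smul_comm]

/-- Isomorphism of representations. -/
def RepIso (π : Representation ℂ A V) (ρ : Representation ℂ A W) : Prop :=
  ∃ e : V ≃ₗ[ℂ] W, ∀ g v, e (π g v) = ρ g (e v)

/-- The space of equivariant linear maps between two representations. -/
def homSpace (π : Representation ℂ A V) (ρ : Representation ℂ A W) :
    Submodule ℂ (V →ₗ[ℂ] W) where
  carrier := {T | ∀ g v, T (π g v) = ρ g (T v)}
  add_mem' := by intro T S hT hS g v; simp [hT g v, hS g v]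
  zero_mem' := by intro g v; simp
  smul_mem' := by intro c T hT g v; simp [hT g v]

/-- Irreducibility: the space is nonzero and the only invariant subspaces are `⊥` and `⊤`. -/
def IsIrred (π : Representation ℂ A V) : Prop :=
  (⊤ : Submodule ℂ V) ≠ ⊥ ∧
    ∀ p : Submodule ℂ V, (∀ g v, v ∈ p → π g v ∈ p) → p = ⊥ ∨ p = ⊤

variable {C : Type} [Group C]

/-- `σ` occurs as a subrepresentation (irreducible constituent) of `ρ`. -/
def Occurs (σ : Representation ℂ C W) (ρ : Representation ℂ C V) : Prop :=
  ∃ T : W →ₗ[ℂ] V, (∀ c w, T (σ c w) = ρ c (T w)) ∧ Function.Injective T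

/-- The space of the representation induced along a group homomorphism `f : C →* A`:
functions `F : A → W` with `F (f h * g) = σ h (F g)`. -/
def indSpace (f : C →* A) (σ : Representation ℂ C W) : Submodule ℂ (A → W) where
  carrier := {F | ∀ (h : C) (g : A), F (f h * g) = σ h (F g)}
  add_mem' := by intro F G hF hG h g; simp [hF h g, hG h g]
  zero_mem' := by intro h g; simp
  smul_mem' := by intro c F hF h g; simp [hF h g]

/-- The induced representation, with `A` acting by right translation. -/
def ind (f : C →* A) (σ : Representation ℂ C W) :
    Representation ℂ A (indSpace f σ) where
  toFun a :=
    { toFun := fun F => ⟨fun g => F.1 (g * a), fun h g => by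
        simpa [mul_assoc] using F.2 h (g * a)⟩
      map_add' := fun F G => rfl
      map_smul' := fun c F => rfl }
  map_one' := by
    apply LinearMap.ext; intro F; apply Subtype.ext; funext g; simp
  map_mul' a b := by
    apply LinearMap.ext; intro F; apply Subtype.ext; funext g
    simp [mul_assoc]

/-- Restriction of a representation of `A` to a subgroup `B`. -/
def Res (B : Subgroup A) (π : Representation ℂ A V) : Representation ℂ B V :=
  π.comp B.subtype

/-- Conjugation `x ↦ g x g⁻¹` as an endomorphism of a normal subgroup `B`. -/
def conjHom (B : Subgroup A) [hB : B.Normal] (g : A) : B →* B where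
  toFun x := ⟨g * x * g⁻¹, hB.conj_mem x x.2 g⟩
  map_one' := by ext; simp
  map_mul' x y := by ext; simp [mul_assoc]

/-- The conjugate representation `σ^g : x ↦ σ (g x g⁻¹)` of a normal subgroup. -/
def conjRep (B : Subgroup A) [B.Normal] (σ : Representation ℂ B W) (g : A) :
    Representation ℂ B W :=
  σ.comp (conjHom B g)

/-- The twist of `π` by a character of the quotient `A ⧸ B`. -/
def charTwist (B : Subgroup A) [B.Normal] (π : Representation ℂ A V)
    (χ : (A ⧸ B) →* ℂˣ) : Representation ℂ A V :=
  twist π (χ.comp (QuotientGroup.mk' B))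

/-- The group `X(π)` of characters `χ` of `A ⧸ B` with `π ⊗ χ ≃ π`, as a set. -/
def Xgrp (B : Subgroup A) [B.Normal] (π : Representation ℂ A V) :
    Set ((A ⧸ B) →* ℂˣ) :=
  {χ | RepIso (charTwist B π χ) π}

/-- `B(π)`: the common kernel in `A` of all characters in `X(π)`. -/
def Bpi (B : Subgroup A) [B.Normal] (π : Representation ℂ A V) : Subgroup A :=
  ⨅ χ ∈ Xgrp B π, MonoidHom.ker ((χ : (A ⧸ B) →* ℂˣ).comp (QuotientGroup.mk' B))

lemma le_Bpi (B : Subgroup A) [B.Normal] (π : Representation ℂ A V) :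
    B ≤ Bpi B π := by
  intro b hb
  simp only [Bpi, Subgroup.mem_iInf]
  intro χ _
  simp [MonoidHom.mem_ker, (QuotientGroup.eq_one_iff b).2 hb]


instance indAddCommGroup {C : Type} [Group C] (f : C →* A) (σ : Representation ℂ C W) :
    AddCommGroup ↥(indSpace f σ) :=
  Submodule.addCommGroup _

instance indModule {C : Type} [Group C] (f : C →* A) (σ : Representation ℂ C W) :
    Module ℂ ↥(indSpace f σ) :=
  Submodule.module _

instance indHomAddCommGroup {C : Type} [Group C] (f : C →* A) (σ : Representation ℂ C W) :
    AddCommGroup (V →ₗ[ℂ] ↥(indSpace f σ)) :=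
  LinearMap.addCommGroup

instance indHomModule {C : Type} [Group C] (f : C →* A) (σ : Representation ℂ C W) :
    Module ℂ (V →ₗ[ℂ] ↥(indSpace f σ)) :=
  LinearMap.module

end ReprDefs


section Aux
open Module

variable {A : Type} [Group A] {V W : Type}
  [AddCommGroup V] [Module ℂ V] [AddCommGroup W] [Module ℂ W]

lemma mem_homSpace {π : Representation ℂ A V} {ρ : Representation ℂ A W} {T : V →ₗ[ℂ] W} :
    T ∈ homSpace π ρ ↔ ∀ g v, T (π g v) = ρ g (T v) := Iff.rfl

lemma repIso_symm {π : Representation ℂ A V} {ρ : Representation ℂ A W}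
    (h : RepIso π ρ) : RepIso ρ π := by
  obtain ⟨e, he⟩ := h
  refine ⟨e.symm, fun g w => ?_⟩
  apply e.injective
  rw [e.apply_symm_apply, he, e.apply_symm_apply]

lemma IsIrred.nontrivial {π : Representation ℂ A V} (hπ : IsIrred π) : Nontrivial V := by
  by_contra h
  haveI := not_nontrivial_iff_subsingleton.mp h
  exact hπ.1 (Subsingleton.elim _ _)

/-- Schur: every endomorphism of an irreducible rep is scalar. -/
lemma schur_endo {π : Representation ℂ A V} [FiniteDimensional ℂ V] (hπ : IsIrred π) :
    homSpace π π = ℂ ∙ (LinearMap.id : V →ₗ[ℂ] V) := by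
  haveI := hπ.nontrivial
  apply le_antisymm
  · intro T hT
    obtain ⟨c, hc⟩ := Module.End.exists_eigenvalue (T : Module.End ℂ V)
    obtain ⟨v, hv⟩ := hc.exists_hasEigenvector
    have hvmem : v ∈ LinearMap.ker (T - c • LinearMap.id) := by
      rw [LinearMap.mem_ker, LinearMap.sub_apply, LinearMap.smul_apply, LinearMap.id_apply,
        hv.apply_eq_smul, sub_self]
    have hker : LinearMap.ker (T - c • LinearMap.id) ≠ ⊥ := by
      intro h
      rw [h, Submodule.mem_bot] at hvmem
      exact hv.2 hvmem
    have hinv : ∀ g w, w ∈ LinearMap.ker (T - c • LinearMap.id) →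
        π g w ∈ LinearMap.ker (T - c • LinearMap.id) := by
      intro g w hw
      rw [LinearMap.mem_ker] at hw ⊢
      have := hT g w
      simp only [LinearMap.sub_apply, LinearMap.smul_apply, LinearMap.id_apply,
        sub_eq_zero] at hw ⊢
      rw [this, hw, map_smul]
    rcases hπ.2 _ hinv with h | h
    · exact absurd h hker
    · have : T - c • LinearMap.id = 0 := LinearMap.ker_eq_top.mp h
      have hT' : T = c • LinearMap.id := by rwa [sub_eq_zero] at this
      rw [hT']
      exact Submodule.smul_mem _ _ (Submodule.mem_span_singleton_self _)
  · rw [Submodule.span_singleton_le_iff_mem]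
    intro g v; simp

lemma schur_finrank_endo {π : Representation ℂ A V} [FiniteDimensional ℂ V]
    (hπ : IsIrred π) : finrank ℂ (homSpace π π) = 1 := by
  haveI := hπ.nontrivial
  rw [schur_endo hπ]
  exact finrank_span_singleton (by
    intro h
    obtain ⟨v, hv⟩ := exists_ne (0 : V)
    exact hv (by simpa using LinearMap.congr_fun h v))

/-- A nonzero intertwiner between irreducibles is an isomorphism. -/
lemma schur_iso {π : Representation ℂ A V} {ρ : Representation ℂ A W}
    (hπ : IsIrred π) (hρ : IsIrred ρ) {T : V →ₗ[ℂ] W}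
    (hT : T ∈ homSpace π ρ) (hT0 : T ≠ 0) : RepIso π ρ := by
  have hker : LinearMap.ker T = ⊥ := by
    rcases hπ.2 (LinearMap.ker T) (fun g v hv => by
      rw [LinearMap.mem_ker] at hv ⊢; rw [hT g v, hv, map_zero]) with h | h
    · exact h
    · exact absurd (LinearMap.ker_eq_top.mp h) hT0
  have hrange : LinearMap.range T = ⊤ := by
    rcases hρ.2 (LinearMap.range T) (fun g w hw => by
      obtain ⟨v, rfl⟩ := hw
      exact ⟨π g v, (hT g v)⟩) with h | h
    · exact absurd (LinearMap.range_eq_bot.mp h) hT0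
    · exact h
  refine ⟨LinearEquiv.ofBijective T ⟨LinearMap.ker_eq_bot.mp hker,
    LinearMap.range_eq_top.mp hrange⟩, fun g v => hT g v⟩

/-- Transport of hom spaces along an isomorphism of the target. -/
lemma finrank_homSpace_congr {π : Representation ℂ A V} {ρ σ : Representation ℂ A W}
    (e : W ≃ₗ[ℂ] W) (he : ∀ g w, e (ρ g w) = σ g (e w)) :
    finrank ℂ (homSpace π ρ) = finrank ℂ (homSpace π σ) := by
  have he' : ∀ g w, e.symm (σ g w) = ρ g (e.symm w) := by
    intro g w
    apply e.injective
    rw [e.apply_symm_apply, he, e.apply_symm_apply]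
  refine LinearEquiv.finrank_eq (LinearEquiv.ofLinear
    (LinearMap.codRestrict _ ((LinearMap.llcomp ℂ V W W e.toLinearMap).comp
      (homSpace π ρ).subtype) ?_)
    (LinearMap.codRestrict _ ((LinearMap.llcomp ℂ V W W e.symm.toLinearMap).comp
      (homSpace π σ).subtype) ?_) ?_ ?_)
  · intro T g v
    simp only [LinearMap.coe_comp, Function.comp_apply, LinearMap.llcomp_apply,
      LinearMap.coe_comp, Submodule.coe_subtype]
    simp only [LinearMap.comp_apply, LinearEquiv.coe_coe]
    rw [T.2 g v, he]
  · intro T g v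
    simp only [LinearMap.coe_comp, Function.comp_apply, LinearMap.llcomp_apply,
      Submodule.coe_subtype]
    simp only [LinearMap.comp_apply, LinearEquiv.coe_coe]
    rw [T.2 g v, he']
  · apply LinearMap.ext; intro T; apply Subtype.ext
    apply LinearMap.ext; intro v
    show e (e.symm (T.1 v)) = T.1 v
    simp
  · apply LinearMap.ext; intro T; apply Subtype.ext
    apply LinearMap.ext; intro v
    show e.symm (e (T.1 v)) = T.1 v
    simp

end Aux
section Aux2
open Module

variable {A : Type} [Group A] {V : Type} [AddCommGroup V] [Module ℂ V]

lemma twist_apply (π : Representation ℂ A V) (χ : A →* ℂˣ) (g : A) (v : V) :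
    twist π χ g v = (χ g : ℂ) • π g v := rfl

lemma twist_irred {π : Representation ℂ A V} (hπ : IsIrred π) (χ : A →* ℂˣ) :
    IsIrred (twist π χ) := by
  refine ⟨hπ.1, fun p hp => hπ.2 p fun g v hv => ?_⟩
  have h1 : (χ g : ℂ) • π g v ∈ p := hp g v hv
  have h2 := p.smul_mem ((χ g : ℂ)⁻¹) h1
  rwa [inv_smul_smul₀ (Units.ne_zero (χ g))] at h2

lemma charTwist_apply {B : Subgroup A} [B.Normal] (π : Representation ℂ A V)
    (χ : (A ⧸ B) →* ℂˣ) (g : A) (v : V) :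
    charTwist B π χ g v = (χ (QuotientGroup.mk g) : ℂ) • π g v := rfl

lemma charTwist_irred {B : Subgroup A} [B.Normal] {π : Representation ℂ A V}
    (hπ : IsIrred π) (χ : (A ⧸ B) →* ℂˣ) : IsIrred (charTwist B π χ) :=
  twist_irred hπ _

open scoped Classical in
/-- Schur dimension count for the `χ`-twisted hom space. -/
lemma finrank_homSpace_charTwist {B : Subgroup A} [B.Normal] [FiniteDimensional ℂ V]
    {π : Representation ℂ A V} (hπ : IsIrred π) (χ : (A ⧸ B) →* ℂˣ) :
    finrank ℂ (homSpace π (charTwist B π χ)) = if χ ∈ Xgrp B π then 1 else 0 := by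
  split_ifs with h
  · obtain ⟨e, he⟩ := repIso_symm h
    rw [← finrank_homSpace_congr e he]
    exact schur_finrank_endo hπ
  · rw [Submodule.finrank_eq_zero]
    by_contra hne
    obtain ⟨T, hT, hT0⟩ : ∃ T, T ∈ homSpace π (charTwist B π χ) ∧ T ≠ 0 := by
      rcases Submodule.ne_bot_iff _ |>.mp hne with ⟨T, hT, hT0⟩
      exact ⟨T, hT, hT0⟩
    exact h (repIso_symm (schur_iso hπ (charTwist_irred hπ χ) hT hT0))

/-- Characters in `X(π)` intertwine `π|_B` with itself. -/
lemma homSpace_charTwist_le_res {B : Subgroup A} [B.Normal]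
    (π : Representation ℂ A V) (χ : (A ⧸ B) →* ℂˣ) :
    homSpace π (charTwist B π χ) ≤ homSpace (Res B π) (Res B π) := by
  intro T hT b v
  have := hT (b : A) v
  rw [charTwist_apply] at this
  have hb : (QuotientGroup.mk (b : A) : A ⧸ B) = 1 := (QuotientGroup.eq_one_iff _).mpr b.2
  rw [hb, map_one, Units.val_one, one_smul] at this
  exact this

/-- Sum of all characters of a finite abelian group evaluated at `q ≠ 1` vanishes. -/
lemma sum_char_eq_zero {G : Type} [CommGroup G] [Finite G] [Fintype (G →* ℂˣ)]
    {q : G} (hq : q ≠ 1) :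
    ∑ χ : G →* ℂˣ, ((χ q : ℂˣ) : ℂ) = 0 := by
  haveI : NeZero ((Monoid.exponent G : ℂ)) :=
    ⟨Nat.cast_ne_zero.mpr Monoid.exponent_ne_zero_of_finite⟩
  obtain ⟨ψ, hψ⟩ := CommGroup.exists_apply_ne_one_of_hasEnoughRootsOfUnity G ℂ hq
  have key : ∑ χ : G →* ℂˣ, (((ψ q : ℂˣ) : ℂ) * ((χ q : ℂˣ) : ℂ))
      = ∑ χ : G →* ℂˣ, ((χ q : ℂˣ) : ℂ) :=
    Fintype.sum_equiv (Equiv.mulLeft ψ) _ _ (fun χ => by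
      simp [MonoidHom.mul_apply, Units.val_mul])
  rw [← Finset.mul_sum] at key
  have hψ1 : ((ψ q : ℂˣ) : ℂ) ≠ 1 := fun h => hψ (Units.ext (by simpa using h))
  have hz : (((ψ q : ℂˣ) : ℂ) - 1) * ∑ χ : G →* ℂˣ, ((χ q : ℂˣ) : ℂ) = 0 := by
    linear_combination key
  rcases mul_eq_zero.mp hz with h | h
  · exact absurd (by linear_combination h : ((ψ q : ℂˣ) : ℂ) = 1) hψ1
  · exact h

end Aux2
section Aux3
open Module

variable {A : Type} [Group A] {V : Type} [AddCommGroup V] [Module ℂ V]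

/-- The averaged operator lies in the `χ`-twisted hom space. -/
lemma avg_mem [Fintype A] {B : Subgroup A} [B.Normal] (π : Representation ℂ A V)
    (χ : (A ⧸ B) →* ℂˣ) (T : V →ₗ[ℂ] V) :
    (∑ a : A, ((χ (QuotientGroup.mk a) : ℂˣ) : ℂ) • (π a ∘ₗ T ∘ₗ π a⁻¹))
      ∈ homSpace π (charTwist B π χ) := by
  intro g v
  rw [charTwist_apply]
  simp only [LinearMap.sum_apply, LinearMap.smul_apply, LinearMap.comp_apply,
    map_sum, map_smul, Finset.smul_sum, smul_smul]
  refine Fintype.sum_equiv (Equiv.mulLeft g⁻¹) _ _ (fun a => ?_)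
  simp only [Equiv.coe_mulLeft]
  congr 1
  · rw [← Units.val_mul, ← map_mul, ← QuotientGroup.mk_mul, mul_inv_cancel_left]
  · rw [← Module.End.mul_apply (π g) (π (g⁻¹ * a)), ← map_mul, mul_inv_cancel_left]
    congr 1
    rw [mul_inv_rev, inv_inv, map_mul, Module.End.mul_apply]

/-- Summing the averaged operators over all characters recovers a multiple of `T`. -/
lemma avg_sum [Fintype A] {B : Subgroup A} [B.Normal]
    (hab : ∀ x y : A ⧸ B, x * y = y * x) [Fintype ((A ⧸ B) →* ℂˣ)]
    (π : Representation ℂ A V) (T : V →ₗ[ℂ] V)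
    (hT : T ∈ homSpace (Res B π) (Res B π)) :
    (∑ χ : (A ⧸ B) →* ℂˣ, ∑ a : A, ((χ (QuotientGroup.mk a) : ℂˣ) : ℂ) • (π a ∘ₗ T ∘ₗ π a⁻¹))
      = ((Nat.card B * Fintype.card ((A ⧸ B) →* ℂˣ) : ℕ) : ℂ) • T := by
  classical
  letI : CommGroup (A ⧸ B) := { (inferInstance : Group (A ⧸ B)) with mul_comm := hab }
  rw [Finset.sum_comm]
  have step : ∀ a : A,
      (∑ χ : (A ⧸ B) →* ℂˣ, ((χ (QuotientGroup.mk a) : ℂˣ) : ℂ) • (π a ∘ₗ T ∘ₗ π a⁻¹))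
      = if (QuotientGroup.mk a : A ⧸ B) = 1
          then ((Fintype.card ((A ⧸ B) →* ℂˣ) : ℕ) : ℂ) • T else 0 := by
    intro a
    rw [← Finset.sum_smul]
    split_ifs with h
    · have hmemB : a ∈ B := (QuotientGroup.eq_one_iff a).mp h
      have h1 : (∑ χ : (A ⧸ B) →* ℂˣ, ((χ (QuotientGroup.mk a) : ℂˣ) : ℂ))
          = (Fintype.card ((A ⧸ B) →* ℂˣ) : ℂ) := by
        rw [h]; simp [Finset.card_univ]
      rw [h1]
      congr 1
      apply LinearMap.ext; intro v
      have h2 : T (π a⁻¹ v) = π a⁻¹ (T v) := hT ⟨a⁻¹, B.inv_mem hmemB⟩ v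
      simp only [LinearMap.comp_apply]
      rw [h2, ← Module.End.mul_apply, ← map_mul, mul_inv_cancel, map_one,
        Module.End.one_apply]
    · rw [sum_char_eq_zero h, zero_smul]
  rw [Finset.sum_congr rfl (fun a _ => step a)]
  rw [← Finset.sum_filter, Finset.sum_const]
  have hcard : (Finset.univ.filter (fun a : A => (QuotientGroup.mk a : A ⧸ B) = 1)).card
      = Nat.card B := by
    rw [Nat.card_eq_fintype_card, Fintype.card_subtype]
    congr 1
    exact Finset.ext (fun a => by simp [QuotientGroup.eq_one_iff])
  rw [hcard, ← Nat.cast_smul_eq_nsmul ℂ, smul_smul, ← Nat.cast_mul]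

end Aux3
section Aux4
open Module

variable {A : Type} [Group A] {V : Type} [AddCommGroup V] [Module ℂ V]

lemma eigops_linearIndependent {B : Subgroup A} [B.Normal] {π : Representation ℂ A V}
    {ι : Type} [Fintype ι] (χ : ι → ((A ⧸ B) →* ℂˣ)) (hinj : Function.Injective χ)
    (s : ι → (V →ₗ[ℂ] V)) (hs : ∀ i, s i ∈ homSpace π (charTwist B π (χ i)))
    (hs0 : ∀ i, s i ≠ 0) : LinearIndependent ℂ s := by
  classical
  rw [Fintype.linearIndependent_iff]
  intro c hc i0
  by_contra hne
  apply hs0 i0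
  rw [← Module.forall_dual_apply_eq_zero_iff ℂ]
  intro f
  set m : ι → (A →* ℂ) := fun i =>
    (Units.coeHom ℂ).comp (((χ i)⁻¹).comp (QuotientGroup.mk' B)) with hm
  have hmapp : ∀ i (a : A), m i a = (((χ i (QuotientGroup.mk a))⁻¹ : ℂˣ) : ℂ) := by
    intro i a; rfl
  have hminj : Function.Injective m := by
    intro i j hij
    apply hinj
    refine MonoidHom.ext (fun q => ?_)
    obtain ⟨a, rfl⟩ := QuotientGroup.mk_surjective q
    have h1 : m i a = m j a := by rw [hij]
    rw [hmapp, hmapp] at h1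
    exact inv_injective (Units.ext h1)
  -- conjugation identity
  have hconj : ∀ i (g : A) (w : V),
      π g ((s i) (π g⁻¹ w)) = (((χ i (QuotientGroup.mk g))⁻¹ : ℂˣ) : ℂ) • s i w := by
    intro i g w
    have := hs i g⁻¹ w
    rw [charTwist_apply] at this
    rw [this, map_smul, ← Module.End.mul_apply, ← map_mul, mul_inv_cancel, map_one,
      Module.End.one_apply]
    congr 2
    rw [QuotientGroup.mk_inv, map_inv]
  have key : ∀ g : A, ∑ i, (c i * f (s i)) * m i g = 0 := by
    intro g
    have h0 : ∀ w : V, π g ((∑ i, c i • s i) (π g⁻¹ w)) = 0 := by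
      intro w; rw [hc]; simp
    have h1 : ∀ w : V, (∑ i, (c i * (((χ i (QuotientGroup.mk g))⁻¹ : ℂˣ) : ℂ)) • s i) w = 0 := by
      intro w
      have := h0 w
      simp only [LinearMap.sum_apply, LinearMap.smul_apply, map_sum, map_smul] at this ⊢
      rw [← this]
      refine Finset.sum_congr rfl (fun i _ => ?_)
      rw [hconj, smul_smul]
    have h2 : (∑ i, (c i * (((χ i (QuotientGroup.mk g))⁻¹ : ℂˣ) : ℂ)) • s i) = 0 :=
      LinearMap.ext (fun w => by rw [h1]; rfl)
    have h3 := congrArg f h2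
    rw [map_sum, map_zero] at h3
    rw [← h3]
    refine Finset.sum_congr rfl (fun i _ => ?_)
    rw [map_smul, hmapp]
    simp only [smul_eq_mul]
    ring
  have hfun : ∑ i, (c i * f (s i)) • (⇑(m i) : A → ℂ) = 0 := by
    funext g
    simp only [Finset.sum_apply, Pi.smul_apply, smul_eq_mul, Pi.zero_apply]
    exact key g
  have hli := (linearIndependent_monoidHom A ℂ).comp m hminj
  have := Fintype.linearIndependent_iff.mp hli (fun i => c i * f (s i)) hfun i0
  rcases mul_eq_zero.mp this with h | h
  · exact absurd h hne
  · exact h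

end Aux4
theorem dim_intertwiners_eq_card_X {A : Type} [Group A] [Fintype A] {V W : Type}
    [AddCommGroup V] [Module ℂ V] [FiniteDimensional ℂ V]
    [AddCommGroup W] [Module ℂ W] [FiniteDimensional ℂ W]
    (B : Subgroup A) [B.Normal] (hab : ∀ x y : A ⧸ B, x * y = y * x)
    (π : Representation ℂ A V) (hπ : IsIrred π) :
    Module.finrank ℂ (homSpace (Res B π) (Res B π)) = Nat.card (Xgrp B π) := by
  classical
  letI : CommGroup (A ⧸ B) := { (inferInstance : Group (A ⧸ B)) with mul_comm := hab }
  haveI : Finite (A ⧸ B) := Quotient.finite _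
  haveI : NeZero ((Monoid.exponent (A ⧸ B) : ℂ)) :=
    ⟨Nat.cast_ne_zero.mpr Monoid.exponent_ne_zero_of_finite⟩
  haveI : Finite ((A ⧸ B) →* ℂˣ) := by
    obtain ⟨e⟩ := CommGroup.monoidHom_mulEquiv_of_hasEnoughRootsOfUnity (A ⧸ B) ℂ
    exact Finite.of_equiv _ e.symm.toEquiv
  haveI : Fintype ((A ⧸ B) →* ℂˣ) := Fintype.ofFinite _
  haveI : Fintype ↥(Xgrp B π) := Fintype.ofFinite _
  have hdim : ∀ χ : ↥(Xgrp B π),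
      Module.finrank ℂ (homSpace π (charTwist B π χ.1)) = 1 := fun χ => by
    rw [finrank_homSpace_charTwist hπ, if_pos χ.2]
  have hne : ∀ χ : ↥(Xgrp B π), homSpace π (charTwist B π χ.1) ≠ ⊥ := fun χ hbot => by
    have := hdim χ
    rw [hbot, finrank_bot] at this
    exact zero_ne_one this
  choose s hs hs0 using fun χ : ↥(Xgrp B π) => (Submodule.ne_bot_iff _).mp (hne χ)
  have hspan1 : ∀ χ : ↥(Xgrp B π),
      homSpace π (charTwist B π χ.1) = ℂ ∙ s χ := fun χ => by
    symm
    apply Submodule.eq_of_le_of_finrank_eq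
    · rw [Submodule.span_singleton_le_iff_mem]; exact hs χ
    · rw [finrank_span_singleton (hs0 χ), hdim χ]
  have hXeq : homSpace (Res B π) (Res B π) = Submodule.span ℂ (Set.range s) := by
    apply le_antisymm
    · intro T hT
      have hc0 : ((Nat.card B * Fintype.card ((A ⧸ B) →* ℂˣ) : ℕ) : ℂ) ≠ 0 := by
        refine Nat.cast_ne_zero.mpr (Nat.mul_ne_zero ?_ ?_)
        · exact Nat.card_pos.ne'
        · exact Fintype.card_ne_zero
      have hTeq : T = (((Nat.card B * Fintype.card ((A ⧸ B) →* ℂˣ) : ℕ) : ℂ))⁻¹ •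
          (∑ χ : (A ⧸ B) →* ℂˣ,
            ∑ a : A, ((χ (QuotientGroup.mk a) : ℂˣ) : ℂ) • (π a ∘ₗ T ∘ₗ π a⁻¹)) := by
        rw [avg_sum hab π T hT, inv_smul_smul₀ hc0]
      rw [hTeq]
      refine Submodule.smul_mem _ _ (Submodule.sum_mem _ (fun χ _ => ?_))
      by_cases hχ : χ ∈ Xgrp B π
      · have hmem := avg_mem π χ T
        rw [hspan1 ⟨χ, hχ⟩] at hmem
        refine Submodule.span_mono ?_ hmem
        rw [Set.singleton_subset_iff]
        exact ⟨⟨χ, hχ⟩, rfl⟩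
      · have hbot : homSpace π (charTwist B π χ) = ⊥ := by
          have h0 := finrank_homSpace_charTwist hπ χ
          rw [if_neg hχ] at h0
          exact Submodule.finrank_eq_zero.mp h0
        have hmem := avg_mem π χ T
        rw [hbot, Submodule.mem_bot] at hmem
        rw [hmem]
        exact Submodule.zero_mem _
    · rw [Submodule.span_le]
      rintro _ ⟨χ, rfl⟩
      exact homSpace_charTwist_le_res π χ.1 (hs χ)
  have hli : LinearIndependent ℂ s :=
    eigops_linearIndependent (fun χ : ↥(Xgrp B π) => χ.1) Subtype.coe_injective s hs hs0
  rw [hXeq, finrank_span_eq_card hli, Nat.card_eq_fintype_card]
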